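/- Let φ : ℝ^m → ℝ^n be smooth and let v, w : ℝ^m → ℝ^n be smooth with compact support. Define G(s,t) = ∫_{ℝ^m} ( ‖(φ + tv + sw)^*h‖²(x) − ‖φ^*h‖²(x) ) dx. Then the mixed second partial derivative of G at (s,t) = (0,0) exists and equals 4 ∫_{ℝ^m} ∑_{i,j=1}^m [ ( ⟨∂_i w, ∂_j φ⟩ + ⟨∂_i φ, ∂_j w⟩ ) ⟨∂_i v, ∂_j φ⟩ + ⟨∂_i φ, ∂_j φ⟩ ⟨∂_i v, ∂_j w⟩ ] dx. -/

import Mathlib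

/-!
With `a = dφ`, `b = dv`, `c = dw` and `gram a b = (⟨a_i, b_j⟩)_{ij}`, the integrand is
`‖gram (a + t b + s c) (a + t b + s c)‖² - ‖gram a a‖²`, a polynomial in `(s, t)` because `gram`
and the Frobenius pairing are bilinear. For fixed `s` its `t`-coefficients are continuous and
vanish off `supp v`, except the constant one, which vanishes off `supp w`; so they are integrable
and the integral is a polynomial in `t`, whose derivative at `0` is the integral of the linear
coefficient `2 ⟨gram a' a', gram a' b + gram b a'⟩`, `a' = a + s c`. That is a polynomial in `s`
with coefficients supported in `supp v`, and the same argument differentiates it at `0`. The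
symmetry `⟨gram a b, gram c d⟩ = ⟨gram b a, gram d c⟩` then gives the stated integrand.
-/

open scoped BigOperators

/-- Partial derivative `∂φ/∂x_i` of a map `φ : ℝ^m → ℝ^n`. -/
noncomputable def pd {m n : ℕ} (φ : (Fin m → ℝ) → Fin n → ℝ) (i : Fin m) (x : Fin m → ℝ) :
    Fin n → ℝ :=
  fderiv ℝ φ x (Pi.single i 1)

/-- Euclidean inner product on `ℝ^n`. -/
def inn {n : ℕ} (u v : Fin n → ℝ) : ℝ := ∑ k, u k * v k

open MeasureTheory

section Gram

variable {m n : ℕ}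

def gram (a b : Fin m → Fin n → ℝ) : Fin m → Fin m → ℝ := fun i j => inn (a i) (b j)

def frob (M N : Fin m → Fin m → ℝ) : ℝ := ∑ i, ∑ j, M i j * N i j

@[simp] lemma gram_add_left (a a' b : Fin m → Fin n → ℝ) :
    gram (a + a') b = gram a b + gram a' b := by
  ext i j; exact add_dotProduct _ _ _

@[simp] lemma gram_add_right (a b b' : Fin m → Fin n → ℝ) :
    gram a (b + b') = gram a b + gram a b' := by
  ext i j; exact dotProduct_add _ _ _

@[simp] lemma gram_smul_left (t : ℝ) (a b : Fin m → Fin n → ℝ) :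
    gram (t • a) b = t • gram a b := by
  ext i j; exact smul_dotProduct t (a i) (b j)

@[simp] lemma gram_smul_right (t : ℝ) (a b : Fin m → Fin n → ℝ) :
    gram a (t • b) = t • gram a b := by
  ext i j; exact dotProduct_smul t (a i) (b j)

@[simp] lemma gram_zero_left (b : Fin m → Fin n → ℝ) : gram 0 b = 0 := by
  simpa using gram_smul_left 0 0 b

@[simp] lemma gram_zero_right (a : Fin m → Fin n → ℝ) : gram a 0 = 0 := by
  simpa using gram_smul_right 0 a 0

@[simp] lemma frob_add_left (M M' N : Fin m → Fin m → ℝ) :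
    frob (M + M') N = frob M N + frob M' N := by
  simp only [frob, Pi.add_apply, add_mul, Finset.sum_add_distrib]

@[simp] lemma frob_add_right (M N N' : Fin m → Fin m → ℝ) :
    frob M (N + N') = frob M N + frob M N' := by
  simp only [frob, Pi.add_apply, mul_add, Finset.sum_add_distrib]

@[simp] lemma frob_smul_left (t : ℝ) (M N : Fin m → Fin m → ℝ) :
    frob (t • M) N = t * frob M N := by
  simp only [frob, Pi.smul_apply, smul_eq_mul, Finset.mul_sum, mul_assoc]

@[simp] lemma frob_smul_right (t : ℝ) (M N : Fin m → Fin m → ℝ) :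
    frob M (t • N) = t * frob M N := by
  simp only [frob, Pi.smul_apply, smul_eq_mul, Finset.mul_sum, mul_left_comm]

@[simp] lemma frob_zero_right (M : Fin m → Fin m → ℝ) : frob M 0 = 0 := by
  simp [frob]

lemma frob_comm (M N : Fin m → Fin m → ℝ) : frob M N = frob N M := by
  simp only [frob, mul_comm]

lemma frob_gram_swap (a b c d : Fin m → Fin n → ℝ) :
    frob (gram a b) (gram c d) = frob (gram b a) (gram d c) := by
  unfold frob gram
  rw [Finset.sum_comm]
  simp only [inn, mul_comm (a _ _), mul_comm (c _ _)]

@[fun_prop] lemma Continuous.gram {X : Type*} [TopologicalSpace X] {A B : X → Fin m → Fin n → ℝ}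
    (hA : Continuous A) (hB : Continuous B) : Continuous fun x => gram (A x) (B x) := by
  unfold _root_.gram inn; fun_prop

@[fun_prop] lemma Continuous.frob {X : Type*} [TopologicalSpace X] {M N : X → Fin m → Fin m → ℝ}
    (hM : Continuous M) (hN : Continuous N) : Continuous fun x => frob (M x) (N x) := by
  unfold _root_.frob; fun_prop

end Gram

section Expansion

variable {m n : ℕ}

def gramNormSq (a : Fin m → Fin n → ℝ) : ℝ := frob (gram a a) (gram a a)

def gramNormSqDeriv (a b : Fin m → Fin n → ℝ) : ℝ := 2 * frob (gram a a) (gram a b + gram b a)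

lemma gram_add_smul_self (a b : Fin m → Fin n → ℝ) (t : ℝ) :
    gram (a + t • b) (a + t • b) = gram a a + t • (gram a b + gram b a) + t ^ 2 • gram b b := by
  simp only [gram_add_left, gram_add_right, gram_smul_left, gram_smul_right]
  module

lemma frob_add_smul_add_sq_smul_self (M N L : Fin m → Fin m → ℝ) (t : ℝ) :
    frob (M + t • N + t ^ 2 • L) (M + t • N + t ^ 2 • L)
      = frob M M + t * (2 * frob M N) + t ^ 2 * (frob N N + 2 * frob M L)
        + t ^ 3 * (2 * frob N L) + t ^ 4 * frob L L := by
  simp only [frob_add_left, frob_add_right, frob_smul_left, frob_smul_right]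
  rw [frob_comm N M, frob_comm L M, frob_comm L N]
  ring

lemma gramNormSq_add_smul (a b : Fin m → Fin n → ℝ) (t : ℝ) :
    gramNormSq (a + t • b)
      = gramNormSq a + t * gramNormSqDeriv a b
        + t ^ 2 * (frob (gram a b + gram b a) (gram a b + gram b a)
          + 2 * frob (gram a a) (gram b b))
        + t ^ 3 * (2 * frob (gram a b + gram b a) (gram b b))
        + t ^ 4 * frob (gram b b) (gram b b) := by
  rw [gramNormSq, gram_add_smul_self, frob_add_smul_add_sq_smul_self, gramNormSq, gramNormSqDeriv]

lemma gramNormSqDeriv_add_smul (a b c : Fin m → Fin n → ℝ) (s : ℝ) :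
    gramNormSqDeriv (a + s • c) b
      = gramNormSqDeriv a b
        + s * (2 * (frob (gram a a) (gram c b + gram b c)
          + frob (gram a c + gram c a) (gram a b + gram b a)))
        + s ^ 2 * (2 * (frob (gram a c + gram c a) (gram c b + gram b c)
          + frob (gram c c) (gram a b + gram b a)))
        + s ^ 3 * (2 * frob (gram c c) (gram c b + gram b c)) := by
  simp only [gramNormSqDeriv, gram_add_left, gram_add_right, gram_smul_left, gram_smul_right,
    frob_add_left, frob_add_right, frob_smul_left, frob_smul_right]
  ring

lemma two_mul_frob_gram_eq_four_mul_sum (a b c : Fin m → Fin n → ℝ) :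
    2 * (frob (gram a a) (gram c b + gram b c)
        + frob (gram a c + gram c a) (gram a b + gram b a))
      = 4 * ∑ i, ∑ j, ((inn (c i) (a j) + inn (a i) (c j)) * inn (b i) (a j)
          + inn (a i) (a j) * inn (b i) (c j)) := by
  have hsum : ∑ i, ∑ j, ((inn (c i) (a j) + inn (a i) (c j)) * inn (b i) (a j)
      + inn (a i) (a j) * inn (b i) (c j))
      = frob (gram c a + gram a c) (gram b a) + frob (gram a a) (gram b c) := by
    simp only [frob, gram, Pi.add_apply, ← Finset.sum_add_distrib]
  rw [hsum]
  simp only [frob_add_left, frob_add_right]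
  rw [frob_gram_swap a a c b, frob_gram_swap a c a b, frob_gram_swap c a a b]
  ring

end Expansion

section PolynomialIntegrand

variable {X : Type*} [MeasurableSpace X] {μ : Measure X}

lemma hasDerivAt_sum_pow_mul {N : ℕ} (C : Fin (N + 2) → ℝ) :
    HasDerivAt (fun t : ℝ => ∑ k : Fin (N + 2), t ^ (k : ℕ) * C k) (C 1) 0 := by
  have h := HasDerivAt.fun_sum (u := Finset.univ)
    fun (k : Fin (N + 2)) _ => (hasDerivAt_pow (k : ℕ) (0 : ℝ)).mul_const (C k)
  refine h.congr_deriv ?_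
  rw [Finset.sum_eq_single 1]
  · simp
  · rintro ⟨_ | _ | k, _⟩ _ hk
    · simp
    · exact absurd rfl hk
    · simp
  · simp

lemma hasDerivAt_integral_sum_pow_mul {N : ℕ} (c : Fin (N + 2) → X → ℝ)
    (hc : ∀ k, Integrable (c k) μ) :
    HasDerivAt (fun t : ℝ => ∫ x, ∑ k : Fin (N + 2), t ^ (k : ℕ) * c k x ∂μ)
      (∫ x, c 1 x ∂μ) 0 := by
  have h : (fun t : ℝ => ∫ x, ∑ k : Fin (N + 2), t ^ (k : ℕ) * c k x ∂μ)
      = fun t => ∑ k : Fin (N + 2), t ^ (k : ℕ) * ∫ x, c k x ∂μ := by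
    ext t
    rw [integral_finsetSum _ fun k _ => (hc k).const_mul _]
    simp only [integral_const_mul]
  rw [h]
  exact hasDerivAt_sum_pow_mul _

end PolynomialIntegrand

lemma Continuous.integrable_of_forall_eq_zero {X E : Type*} [TopologicalSpace X]
    [MeasurableSpace X] [OpensMeasurableSpace X] {μ : Measure X} [IsFiniteMeasureOnCompacts μ]
    [Zero E] {g : X → ℝ} {B : X → E} (hg : Continuous g) (hB : HasCompactSupport B)
    (hgB : ∀ x, B x = 0 → g x = 0) : Integrable g μ :=
  hg.integrable_of_hasCompactSupport <| hB.mono fun x hx => mt (hgB x) hx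

section Variation

variable {X : Type*} [TopologicalSpace X] [MeasurableSpace X] [OpensMeasurableSpace X]
  {μ : Measure X} [IsFiniteMeasureOnCompacts μ] {m n : ℕ} {A B C : X → Fin m → Fin n → ℝ}

lemma hasDerivAt_integral_gramNormSq_add_smul (hA : Continuous A) (hB : Continuous B)
    (hBs : HasCompactSupport B) {r : X → ℝ} (hr : Integrable (fun x => gramNormSq (A x) - r x) μ) :
    HasDerivAt (fun t : ℝ => ∫ x, gramNormSq (A x + t • B x) - r x ∂μ)
      (∫ x, gramNormSqDeriv (A x) (B x) ∂μ) 0 := by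
  have h := hasDerivAt_integral_sum_pow_mul (μ := μ)
    ![fun x => gramNormSq (A x) - r x,
      fun x => gramNormSqDeriv (A x) (B x),
      fun x => frob (gram (A x) (B x) + gram (B x) (A x)) (gram (A x) (B x) + gram (B x) (A x))
          + 2 * frob (gram (A x) (A x)) (gram (B x) (B x)),
      fun x => 2 * frob (gram (A x) (B x) + gram (B x) (A x)) (gram (B x) (B x)),
      fun x => frob (gram (B x) (B x)) (gram (B x) (B x))] ?_
  · convert h using 2 with t
    · congr 1 with x
      simp only [Fin.sum_univ_succ, Fin.sum_univ_zero, Matrix.cons_val_zero,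
        Matrix.cons_val_succ, Fin.val_zero, Fin.val_succ, gramNormSq_add_smul]
      ring
    · rfl
  · intro k
    fin_cases k
    · exact hr
    all_goals
      exact Continuous.integrable_of_forall_eq_zero (by dsimp [gramNormSqDeriv]; fun_prop) hBs
        fun x hx => by simp [gramNormSqDeriv, hx]

lemma hasDerivAt_integral_gramNormSqDeriv_add_smul (hA : Continuous A) (hB : Continuous B)
    (hC : Continuous C) (hBs : HasCompactSupport B) :
    HasDerivAt (fun s : ℝ => ∫ x, gramNormSqDeriv (A x + s • C x) (B x) ∂μ)
      (∫ x, 2 * (frob (gram (A x) (A x)) (gram (C x) (B x) + gram (B x) (C x))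
        + frob (gram (A x) (C x) + gram (C x) (A x)) (gram (A x) (B x) + gram (B x) (A x))) ∂μ)
      0 := by
  have h := hasDerivAt_integral_sum_pow_mul (μ := μ)
    ![fun x => gramNormSqDeriv (A x) (B x),
      fun x => 2 * (frob (gram (A x) (A x)) (gram (C x) (B x) + gram (B x) (C x))
        + frob (gram (A x) (C x) + gram (C x) (A x)) (gram (A x) (B x) + gram (B x) (A x))),
      fun x => 2 * (frob (gram (A x) (C x) + gram (C x) (A x)) (gram (C x) (B x) + gram (B x) (C x))
        + frob (gram (C x) (C x)) (gram (A x) (B x) + gram (B x) (A x))),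
      fun x => 2 * frob (gram (C x) (C x)) (gram (C x) (B x) + gram (B x) (C x))] ?_
  · convert h using 2 with s
    · congr 1 with x
      simp only [Fin.sum_univ_succ, Fin.sum_univ_zero, Matrix.cons_val_zero,
        Matrix.cons_val_succ, Fin.val_zero, Fin.val_succ, gramNormSqDeriv_add_smul]
      ring
    · rfl
  · intro k
    fin_cases k <;>
      exact Continuous.integrable_of_forall_eq_zero (by dsimp [gramNormSqDeriv]; fun_prop) hBs
        fun x hx => by simp [gramNormSqDeriv, hx]

end Variation

section Gradient

variable {m n : ℕ}

noncomputable def grad (f : (Fin m → ℝ) → Fin n → ℝ) (x : Fin m → ℝ) : Fin m → Fin n → ℝ :=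
  fun i => pd f i x

lemma grad_add {f g : (Fin m → ℝ) → Fin n → ℝ} (hf : Differentiable ℝ f)
    (hg : Differentiable ℝ g) : grad (f + g) = grad f + grad g := by
  ext x i
  simp [grad, pd, fderiv_add (hf x) (hg x)]

lemma grad_const_smul {f : (Fin m → ℝ) → Fin n → ℝ} (hf : Differentiable ℝ f) (c : ℝ) :
    grad (c • f) = c • grad f := by
  ext x i
  simp [grad, pd, fderiv_const_smul (hf x)]

lemma grad_add_smul_add_smul {f g h : (Fin m → ℝ) → Fin n → ℝ} (hf : Differentiable ℝ f)
    (hg : Differentiable ℝ g) (hh : Differentiable ℝ h) (s t : ℝ) :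
    grad (fun y => f y + t • g y + s • h y) = grad f + s • grad h + t • grad g := by
  rw [show (fun y => f y + t • g y + s • h y) = f + t • g + s • h from rfl,
    grad_add (hf.add (hg.const_smul t)) (hh.const_smul s), grad_add hf (hg.const_smul t),
    grad_const_smul hg, grad_const_smul hh, add_right_comm]

lemma continuous_grad {f : (Fin m → ℝ) → Fin n → ℝ} (hf : ContDiff ℝ 1 f) :
    Continuous (grad f) :=
  continuous_pi fun _ => (hf.continuous_fderiv one_ne_zero).clm_apply continuous_const

lemma HasCompactSupport.grad {f : (Fin m → ℝ) → Fin n → ℝ} (hf : HasCompactSupport f) :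
    HasCompactSupport (grad f) :=
  (hf.fderiv ℝ).mono fun x hx h => hx (by ext i; simp [_root_.grad, pd, h])

lemma sum_sum_inn_pd_sq (f : (Fin m → ℝ) → Fin n → ℝ) (x : Fin m → ℝ) :
    ∑ i, ∑ j, inn (pd f i x) (pd f j x) ^ 2 = gramNormSq (grad f x) := by
  simp only [gramNormSq, frob, gram, grad, sq]

end Gradient

/-- Second variation of the symphonic energy along the two-parameter variation
`φ_{s,t} = φ + tv + sw`: the mixed second partial derivative of
`G(s,t) = ∫ (‖(φ+tv+sw)^*h‖² − ‖φ^*h‖²)` at `(0,0)` exists and equals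
`4 ∫ ∑_{i,j} [(⟨∂_i w, ∂_j φ⟩ + ⟨∂_i φ, ∂_j w⟩)⟨∂_i v, ∂_j φ⟩ + ⟨∂_i φ, ∂_j φ⟩⟨∂_i v, ∂_j w⟩]`. -/
theorem symphonic_second_variation (m n : ℕ) (φ v w : (Fin m → ℝ) → Fin n → ℝ)
    (hφ : ContDiff ℝ (⊤ : ℕ∞) φ) (hv : ContDiff ℝ (⊤ : ℕ∞) v) (hw : ContDiff ℝ (⊤ : ℕ∞) w)
    (hvs : HasCompactSupport v) (hws : HasCompactSupport w) :
    HasDerivAt (fun s : ℝ => deriv (fun t : ℝ => ∫ x : Fin m → ℝ,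
          ((∑ i, ∑ j,
              inn (pd (fun y => φ y + t • v y + s • w y) i x)
                  (pd (fun y => φ y + t • v y + s • w y) j x) ^ 2)
            - ∑ i, ∑ j, inn (pd φ i x) (pd φ j x) ^ 2)) 0)
      (4 * ∫ x : Fin m → ℝ, ∑ i, ∑ j,
          ((inn (pd w i x) (pd φ j x) + inn (pd φ i x) (pd w j x)) * inn (pd v i x) (pd φ j x)
            + inn (pd φ i x) (pd φ j x) * inn (pd v i x) (pd w j x))) 0 := by
  have hφ1 : ContDiff ℝ 1 φ := hφ.of_le (by exact_mod_cast le_top)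
  have hv1 : ContDiff ℝ 1 v := hv.of_le (by exact_mod_cast le_top)
  have hw1 : ContDiff ℝ 1 w := hw.of_le (by exact_mod_cast le_top)
  have hdφ := continuous_grad hφ1
  have hdv := continuous_grad hv1
  have hdw := continuous_grad hw1
  have hgrad := grad_add_smul_add_smul (hφ1.differentiable one_ne_zero)
    (hv1.differentiable one_ne_zero) (hw1.differentiable one_ne_zero)
  simp only [sum_sum_inn_pd_sq, hgrad, Pi.add_apply, Pi.smul_apply]
  have hfirst (s : ℝ) : deriv (fun t : ℝ => ∫ x, gramNormSq (grad φ x + s • grad w x + t • grad v x)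
        - gramNormSq (grad φ x)) 0
      = ∫ x, gramNormSqDeriv (grad φ x + s • grad w x) (grad v x) := by
    have hr : Integrable fun x => gramNormSq (grad φ x + s • grad w x) - gramNormSq (grad φ x) :=
      Continuous.integrable_of_forall_eq_zero (by unfold gramNormSq; fun_prop) hws.grad
        fun x hx => by simp [hx]
    exact (hasDerivAt_integral_gramNormSq_add_smul (by fun_prop) hdv hvs.grad hr).deriv
  simp only [hfirst]
  convert hasDerivAt_integral_gramNormSqDeriv_add_smul (μ := volume) hdφ hdv hdw hvs.grad using 1
  rw [← integral_const_mul]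
  congr 1 with x
  exact (two_mul_frob_gram_eq_four_mul_sum _ _ _).symm
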